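/- Let g ∈ Sp(V). Define Z : V_ℂ → V_ℂ (complex-linear) by Z(v₊) = (C_g⁻¹v)₋ + (Z_{g⁻¹}v)₊ and Z(v₋) = (C_{g⁻¹}⁻¹v)₊ + (Z_g v)₋ for v ∈ V. Then the Gaussian u_g = e^Z ∈ SV_ℂ' is the kernel of a nonzero linear map U_g : SV → SV' satisfying the intertwining relations U_g∘c(v) = (c(C_g v) + a(A_g v))∘U_g and U_g∘a(v) = (c(A_g v) + a(C_g v))∘U_g for all v ∈ V. -/

import Mathlib

open scoped ComplexConjugate

noncomputable section

section Defs

variable {V W A : Type} [AddCommGroup V] [Module ℂ V] [CommRing A] [Algebra ℂ A]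

/-- `A` (with embedding `ι`) is the symmetric algebra of `V`: universal property. -/
def IsSymmAlg (ι : V →ₗ[ℂ] A) : Prop :=
  ∀ (B : Type) [CommRing B] [Algebra ℂ B] (f : V →ₗ[ℂ] B),
    ∃! F : A →ₐ[ℂ] B, ∀ v, F (ι v) = f v

/-- The span of `n`-fold products of generators: the degree-`n` part. -/
def GradeOf (gen : W → A) (n : ℕ) : Submodule ℂ A :=
  Submodule.span ℂ {a | ∃ f : Fin n → W, a = ∏ i, gen (f i)}

/-- The algebra is spanned by products of generators. -/
def SpanProdsOf (gen : W → A) : Prop :=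
  ∀ x : A, x ∈ Submodule.span ℂ {a | ∃ (n : ℕ) (f : Fin n → W), a = ∏ i, gen (f i)}

/-- A quadratic: an antilinear functional concentrated in degree 2. -/
def IsQuadOf (gen : W → A) (ζ : A →ₗ⋆[ℂ] ℂ) : Prop :=
  ∀ n : ℕ, n ≠ 2 → ∀ φ ∈ GradeOf gen n, ζ φ = 0

/-- The commutative product on the full antidual induced by the coproduct,
characterized on products of generators. -/
def IsConvProdOf (gen : W → A)
    (mul : (A →ₗ⋆[ℂ] ℂ) → (A →ₗ⋆[ℂ] ℂ) → (A →ₗ⋆[ℂ] ℂ)) : Prop :=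
  ∀ (Φ Ψ : A →ₗ⋆[ℂ] ℂ) (n : ℕ) (v : Fin n → W),
    mul Φ Ψ (∏ i, gen (v i)) =
      ∑ S : Finset (Fin n), Φ (∏ i ∈ S, gen (v i)) * Ψ (∏ i ∈ Sᶜ, gen (v i))

/-- The counit (unit of the antidual algebra): kills products of at least one generator. -/
def IsCounitOf (gen : W → A) (ε : A →ₗ⋆[ℂ] ℂ) : Prop :=
  ∀ (n : ℕ) (v : Fin n → W), ε (∏ i, gen (v i)) = if n = 0 then 1 else 0

/-- Powers of a functional with respect to the convolution product. -/
def powD (mul : (A →ₗ⋆[ℂ] ℂ) → (A →ₗ⋆[ℂ] ℂ) → (A →ₗ⋆[ℂ] ℂ))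
    (ε ζ : A →ₗ⋆[ℂ] ℂ) : ℕ → (A →ₗ⋆[ℂ] ℂ)
  | 0 => ε
  | n + 1 => mul ζ (powD mul ε ζ n)

/-- `E` is the Gaussian `exp ζ = Σ ζⁿ/n!` (a finite sum in each degree). -/
def IsGaussianOf (gen : W → A)
    (mul : (A →ₗ⋆[ℂ] ℂ) → (A →ₗ⋆[ℂ] ℂ) → (A →ₗ⋆[ℂ] ℂ))
    (ε ζ E : A →ₗ⋆[ℂ] ℂ) : Prop :=
  ∀ k : ℕ, ∀ ψ ∈ GradeOf gen k,
    E ψ = ∑ n ∈ Finset.range (k + 1), ((n.factorial : ℂ))⁻¹ * powD mul ε ζ n ψ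

end Defs

section Defs2

variable {V A : Type} [NormedAddCommGroup V] [InnerProductSpace ℂ V]
  [CommRing A] [Algebra ℂ A]

/-- The family of annihilation operators: derivations killing `1` with
`a v (ι w) = ⟨v|w⟩ 1`. -/
def IsAnn (ι : V →ₗ[ℂ] A) (a : V → A →ₗ[ℂ] A) : Prop :=
  ∀ v : V, (∀ x y : A, a v (x * y) = a v x * y + x * a v y) ∧
    a v 1 = 0 ∧ ∀ w : V, a v (ι w) = (inner ℂ v w : ℂ) • (1 : A)

/-- The canonical inner product on the symmetric algebra: graded pieces are
orthogonal and the permanent formula holds. (Antilinear in the first slot.) -/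
def IsCanonInner (ι : V →ₗ[ℂ] A) (Bf : A →ₗ⋆[ℂ] A →ₗ[ℂ] ℂ) : Prop :=
  (∀ (k n : ℕ), k ≠ n → ∀ (x : Fin k → V) (y : Fin n → V),
      Bf (∏ i, ι (x i)) (∏ i, ι (y i)) = 0) ∧
  ∀ (n : ℕ) (x y : Fin n → V),
      Bf (∏ i, ι (x i)) (∏ i, ι (y i)) =
        ∑ p : Equiv.Perm (Fin n), ∏ i, (inner ℂ (x i) (y (p i)) : ℂ)

/-- Iterated annihilation `a(vₙ)⋯a(v₁)φ` (applying `a(v₁)` first). -/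
def iterAnn (a : V → A →ₗ[ℂ] A) : (n : ℕ) → (Fin n → V) → A → A
  | 0, _, φ => φ
  | n + 1, v, φ => a (v (Fin.last n)) (iterAnn a n (fun i => v i.castSucc) φ)

/-- A symmetric bi-antilinear map `V × V → ℂ`. -/
def IsSymAnti (Z : V → V → ℂ) : Prop :=
  (∀ x y, Z x y = Z y x) ∧
  (∀ x y y', Z x (y + y') = Z x y + Z x y') ∧
  (∀ (c : ℂ) (x y : V), Z x (c • y) = conj c * Z x y)

end Defs2

section DefsC

variable {A AC : Type} [CommRing A] [Algebra ℂ A] [CommRing AC] [Algebra ℂ AC]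

/-- An antilinear (conjugate-linear) algebra morphism, such as `φ ↦ φ₋`. -/
def IsAntiAlgHom (m : A → AC) : Prop :=
  (∀ x y : A, m (x + y) = m x + m y) ∧ (∀ (c : ℂ) (x : A), m (c • x) = conj c • m x) ∧
  (∀ x y : A, m (x * y) = m x * m y) ∧ m 1 = 1

end DefsC

/-!
Since `ζ_Z` lives in degree 2, the powers `ζ_Zⁿ` evaluated on a product of generators are sums
over pairings, and the Gaussian `e^Z` obeys Wick's rule: `e^Z(w₀ w₁ ⋯ wₙ)` is the sum over `j` of
`ζ_Z(w₀ wⱼ) e^Z(w₁ ⋯ ŵⱼ ⋯ wₙ)`. On products `φ`, `ψ` of generators of `SV`, both sides of each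
intertwining relation thus expand into the same smaller kernels, and the relations reduce to
identities between the coefficients of this expansion. These follow from `C_{g⁻¹} = C_g*` (which
is where symplecticity enters), from `C_{g⁻¹} C_g + A_{g⁻¹} A_g = 1` and
`A_{g⁻¹} C_g + C_{g⁻¹} A_g = 0`, and from the symmetry of `Z`. Products of generators span `SV`.
-/

open Finset
open scoped InnerProductSpace

section Wick

variable {W AC κ : Type} [CommRing AC] [Algebra ℂ AC] {gen : W → AC}

def SatisfiesWick (gen : W → AC) (ζ E : AC →ₗ⋆[ℂ] ℂ) : Prop :=
  ∀ {ι : Type} [DecidableEq ι] (w₀ : W) (w : ι → W) (s : Finset ι),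
    E (gen w₀ * ∏ i ∈ s, gen (w i)) =
      ∑ j ∈ s, ζ (gen w₀ * gen (w j)) * E (∏ i ∈ s.erase j, gen (w i))

theorem Finset.exists_embedding_fin_map_univ_eq (s : Finset κ) :
    ∃ (n : ℕ) (e : Fin n ↪ κ), univ.map e = s :=
  ⟨#s, s.equivFin.symm.toEmbedding.trans (Function.Embedding.subtype _), by
    rw [← map_map, map_univ_equiv, univ_eq_attach, attach_map_val]⟩

theorem prod_mem_gradeOf (v : κ → W) (s : Finset κ) : ∏ i ∈ s, gen (v i) ∈ GradeOf gen #s := by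
  obtain ⟨n, e, rfl⟩ := exists_embedding_fin_map_univ_eq s
  rw [prod_map, card_map, card_univ, Fintype.card_fin]
  exact Submodule.subset_span ⟨v ∘ e, rfl⟩

theorem IsCounitOf.apply_prod {ε : AC →ₗ⋆[ℂ] ℂ} (hε : IsCounitOf gen ε) (v : κ → W)
    (s : Finset κ) : ε (∏ i ∈ s, gen (v i)) = if #s = 0 then 1 else 0 := by
  obtain ⟨n, e, rfl⟩ := exists_embedding_fin_map_univ_eq s
  rw [prod_map, card_map, card_univ, Fintype.card_fin]
  exact hε n (v ∘ e)

theorem IsQuadOf.apply_prod_of_card_ne_two {ζ : AC →ₗ⋆[ℂ] ℂ} (hζ : IsQuadOf gen ζ) (v : κ → W)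
    {s : Finset κ} (hs : #s ≠ 2) : ζ (∏ i ∈ s, gen (v i)) = 0 :=
  hζ _ hs _ (prod_mem_gradeOf v s)

variable [DecidableEq κ] {mul : (AC →ₗ⋆[ℂ] ℂ) → (AC →ₗ⋆[ℂ] ℂ) → (AC →ₗ⋆[ℂ] ℂ)}
  {ε ζ E : AC →ₗ⋆[ℂ] ℂ}

theorem IsGaussianOf.apply_one (hε : IsCounitOf gen ε) (hE : IsGaussianOf gen mul ε ζ E) :
    E 1 = 1 := by
  have h := hE 0 1 (Submodule.subset_span ⟨Fin.elim0, by simp⟩)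
  simp only [zero_add, range_one, sum_singleton, Nat.factorial_zero, Nat.cast_one, inv_one,
    one_mul, powD] at h
  simpa [h] using hε 0 Fin.elim0

theorem IsConvProdOf.apply_prod (hmul : IsConvProdOf gen mul) (Φ Ψ : AC →ₗ⋆[ℂ] ℂ) (v : κ → W)
    (s : Finset κ) :
    mul Φ Ψ (∏ i ∈ s, gen (v i)) =
      ∑ t ∈ s.powerset, Φ (∏ i ∈ t, gen (v i)) * Ψ (∏ i ∈ s \ t, gen (v i)) := by
  obtain ⟨n, e, rfl⟩ := exists_embedding_fin_map_univ_eq s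
  rw [prod_map, hmul, map_eq_image, powerset_image,
    sum_image fun _ _ _ _ h => image_injective e.injective h]
  refine Fintype.sum_congr _ _ fun t => ?_
  rw [← map_eq_image, ← map_eq_image, ← Finset.map_sdiff, prod_map, prod_map,
    compl_eq_univ_sdiff]

theorem powD_succ_apply_prod (hmul : IsConvProdOf gen mul) (hζ : IsQuadOf gen ζ) (k : ℕ)
    (v : κ → W) (s : Finset κ) :
    powD mul ε ζ (k + 1) (∏ i ∈ s, gen (v i)) =
      ∑ t ∈ s.powersetCard 2, ζ (∏ i ∈ t, gen (v i)) * powD mul ε ζ k (∏ i ∈ s \ t, gen (v i)) := by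
  rw [powD, hmul.apply_prod, powersetCard_eq_filter, sum_filter]
  refine sum_congr rfl fun t _ => ?_
  split_ifs with h
  · rfl
  · rw [hζ.apply_prod_of_card_ne_two v h, zero_mul]

theorem powD_apply_prod_of_card_ne (hmul : IsConvProdOf gen mul) (hζ : IsQuadOf gen ζ)
    (hε : IsCounitOf gen ε) (k : ℕ) (v : κ → W) {s : Finset κ} (hs : #s ≠ 2 * k) :
    powD mul ε ζ k (∏ i ∈ s, gen (v i)) = 0 := by
  induction k generalizing s with
  | zero => rw [powD, hε.apply_prod, if_neg (by simpa using hs)]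
  | succ k ih =>
    rw [powD_succ_apply_prod hmul hζ]
    refine sum_eq_zero fun t ht => ?_
    obtain ⟨hts, ht2⟩ := mem_powersetCard.1 ht
    have := card_le_card hts
    rw [ih (by rw [card_sdiff_of_subset hts]; omega), mul_zero]

theorem Finset.sum_powersetCard_sum_sdiff_comm {M : Type} [AddCommMonoid M] (n : ℕ) (s : Finset κ)
    (f : Finset κ → κ → M) :
    ∑ t ∈ s.powersetCard n, ∑ j ∈ s \ t, f t j = ∑ j ∈ s, ∑ t ∈ (s.erase j).powersetCard n, f t j :=
  sum_comm' fun t j => by simp only [mem_powersetCard, mem_sdiff, subset_erase]; tauto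

theorem powD_succ_apply_prod_insert (hmul : IsConvProdOf gen mul) (hζ : IsQuadOf gen ζ) (k : ℕ)
    (v : κ → W) {a : κ} {s : Finset κ} (ha : a ∉ s) :
    powD mul ε ζ (k + 1) (∏ i ∈ insert a s, gen (v i)) =
      ∑ j ∈ s, ζ (gen (v a) * gen (v j)) * powD mul ε ζ k (∏ i ∈ s.erase j, gen (v i)) +
      ∑ t ∈ s.powersetCard 2,
        ζ (∏ i ∈ t, gen (v i)) * powD mul ε ζ k (∏ i ∈ insert a (s \ t), gen (v i)) := by
  have hne : ∀ j ∈ s, a ≠ j := fun j hj h => ha (h ▸ hj)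
  have hdisj : Disjoint (s.powersetCard 2) ((s.powersetCard 1).image (insert a)) := by
    simp only [disjoint_left, mem_image, mem_powersetCard, not_exists, not_and]
    rintro t ⟨hts, -⟩ u - rfl
    exact ha (hts (mem_insert_self a u))
  rw [powD_succ_apply_prod hmul hζ, powersetCard_succ_insert ha, sum_union hdisj, add_comm,
    powersetCard_one, map_eq_image, image_image,
    sum_image fun j hj j' hj' h => by simpa [(hne j hj).symm] using congr_arg (j ∈ ·) h]
  congr 1
  · refine sum_congr rfl fun j hj => ?_
    have hsdiff : insert a s \ {a, j} = s.erase j := by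
      ext i; simp only [mem_sdiff, mem_insert, mem_singleton, mem_erase]; grind
    change ζ (∏ i ∈ {a, j}, gen (v i)) * powD mul ε ζ k (∏ i ∈ insert a s \ {a, j}, gen (v i)) = _
    rw [prod_pair (hne j hj), hsdiff]
  · refine sum_congr rfl fun t ht => ?_
    rw [insert_sdiff_of_notMem _ fun hat => ha ((mem_powersetCard.1 ht).1 hat)]

theorem powD_succ_wick (hmul : IsConvProdOf gen mul) (hζ : IsQuadOf gen ζ)
    (hε : IsCounitOf gen ε) (k : ℕ) (v : κ → W) {a : κ} {s : Finset κ} (ha : a ∉ s) :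
    powD mul ε ζ (k + 1) (∏ i ∈ insert a s, gen (v i)) =
      (k + 1) *
        ∑ j ∈ s, ζ (gen (v a) * gen (v j)) * powD mul ε ζ k (∏ i ∈ s.erase j, gen (v i)) := by
  induction k generalizing s with
  | zero =>
    rw [powD_succ_apply_prod_insert hmul hζ 0 v ha, Nat.cast_zero, zero_add, one_mul, add_eq_left]
    exact sum_eq_zero fun t _ => by
      rw [powD_apply_prod_of_card_ne hmul hζ hε 0 v (by simp), mul_zero]
  | succ k ih =>
    -- the pairs avoiding `a` contribute `k + 1` further copies of the contractions of `a`
    have hrest : ∑ t ∈ s.powersetCard 2,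
        ζ (∏ i ∈ t, gen (v i)) * powD mul ε ζ (k + 1) (∏ i ∈ insert a (s \ t), gen (v i)) =
        (k + 1) * ∑ j ∈ s, ζ (gen (v a) * gen (v j)) *
          powD mul ε ζ (k + 1) (∏ i ∈ s.erase j, gen (v i)) := by
      simp_rw [ih (fun h => ha (mem_sdiff.1 h).1), powD_succ_apply_prod hmul hζ _ v (s.erase _),
        mul_sum, ← sum_powersetCard_sum_sdiff_comm 2 s, erase_sdiff_comm]
      refine sum_congr rfl fun t _ => sum_congr rfl fun j _ => by ring
    rw [powD_succ_apply_prod_insert hmul hζ _ v ha, hrest]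
    push_cast
    ring

theorem IsGaussianOf.apply_prod_of_card_eq (hmul : IsConvProdOf gen mul) (hζ : IsQuadOf gen ζ)
    (hε : IsCounitOf gen ε) (hE : IsGaussianOf gen mul ε ζ E) (v : κ → W) {s : Finset κ} {k : ℕ}
    (hs : #s = 2 * k) :
    E (∏ i ∈ s, gen (v i)) = (k.factorial : ℂ)⁻¹ * powD mul ε ζ k (∏ i ∈ s, gen (v i)) := by
  rw [hE _ _ (prod_mem_gradeOf v s)]
  refine sum_eq_single_of_mem k (mem_range.2 (by omega)) fun n _ hn => ?_
  rw [powD_apply_prod_of_card_ne hmul hζ hε n v (by omega), mul_zero]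

theorem IsGaussianOf.apply_prod_of_odd (hmul : IsConvProdOf gen mul) (hζ : IsQuadOf gen ζ)
    (hε : IsCounitOf gen ε) (hE : IsGaussianOf gen mul ε ζ E) (v : κ → W) {s : Finset κ}
    (hs : Odd #s) : E (∏ i ∈ s, gen (v i)) = 0 := by
  rw [hE _ _ (prod_mem_gradeOf v s)]
  refine sum_eq_zero fun n _ => ?_
  rw [powD_apply_prod_of_card_ne hmul hζ hε n v (by grind), mul_zero]

theorem IsGaussianOf.wick_insert (hmul : IsConvProdOf gen mul) (hζ : IsQuadOf gen ζ)
    (hε : IsCounitOf gen ε) (hE : IsGaussianOf gen mul ε ζ E) (v : κ → W) {a : κ}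
    {s : Finset κ} (ha : a ∉ s) :
    E (∏ i ∈ insert a s, gen (v i)) =
      ∑ j ∈ s, ζ (gen (v a) * gen (v j)) * E (∏ i ∈ s.erase j, gen (v i)) := by
  have hcard : ∀ j ∈ s, #(s.erase j) + 1 = #s := fun j hj => card_erase_add_one hj
  have hins : #(insert a s) = #s + 1 := card_insert_of_notMem ha
  rcases Nat.even_or_odd #s with ⟨k, hk⟩ | ⟨k, hk⟩
  · rw [hE.apply_prod_of_odd hmul hζ hε v ⟨k, by omega⟩]
    refine (sum_eq_zero fun j hj => ?_).symm
    have := hcard j hj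
    rw [hE.apply_prod_of_odd hmul hζ hε v ⟨k - 1, by omega⟩, mul_zero]
  · rw [hE.apply_prod_of_card_eq hmul hζ hε v (k := k + 1) (by omega),
      powD_succ_wick hmul hζ hε k v ha, mul_sum, mul_sum]
    refine sum_congr rfl fun j hj => ?_
    have := hcard j hj
    rw [hE.apply_prod_of_card_eq hmul hζ hε v (k := k) (by omega), Nat.factorial_succ]
    push_cast
    field_simp

theorem IsGaussianOf.satisfiesWick (hmul : IsConvProdOf gen mul) (hζ : IsQuadOf gen ζ)
    (hε : IsCounitOf gen ε) (hE : IsGaussianOf gen mul ε ζ E) : SatisfiesWick gen ζ E := by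
  intro ι _ w₀ w s
  have h := hE.wick_insert hmul hζ hε (fun o : Option ι => o.elim w₀ w)
    (a := none) (s := s.map .some) (by simp)
  rw [prod_insert (by simp), prod_map, sum_map] at h
  refine h.trans (sum_congr rfl fun j _ => ?_)
  rw [← map_erase, prod_map]
  rfl

end Wick

section ComplexParts

variable {V : Type} [AddCommGroup V] [Module ℂ V]

def complexLinearPart (T : V →ₗ[ℝ] V) (x : V) : V :=
  (2 : ℝ)⁻¹ • (T x - Complex.I • T (Complex.I • x))

def antilinearPart (T : V →ₗ[ℝ] V) (x : V) : V :=
  (2 : ℝ)⁻¹ • (T x + Complex.I • T (Complex.I • x))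

variable (T T' : V →ₗ[ℝ] V)

theorem complexLinearPart_add_antilinearPart (x : V) :
    complexLinearPart T x + antilinearPart T x = T x := by
  simp only [complexLinearPart, antilinearPart]
  module

theorem apply_I_smul (x : V) :
    T (Complex.I • x) = Complex.I • (complexLinearPart T x - antilinearPart T x) := by
  simp only [complexLinearPart, antilinearPart]
  match_scalars <;> ring_nf
  simp

theorem complexLinearPart_comp (x : V) :
    complexLinearPart (T ∘ₗ T') x =
      complexLinearPart T (complexLinearPart T' x) + antilinearPart T (antilinearPart T' x) := by
  simp only [complexLinearPart, antilinearPart, LinearMap.comp_apply, smul_sub, smul_add,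
    smul_comm Complex.I ((2 : ℝ)⁻¹), map_sub, map_add, map_smul, smul_smul, Complex.I_mul_I,
    neg_smul, one_smul, map_neg]
  module

theorem antilinearPart_comp (x : V) :
    antilinearPart (T ∘ₗ T') x =
      antilinearPart T (complexLinearPart T' x) + complexLinearPart T (antilinearPart T' x) := by
  simp only [complexLinearPart, antilinearPart, LinearMap.comp_apply, smul_sub, smul_add,
    smul_comm Complex.I ((2 : ℝ)⁻¹), map_sub, map_add, map_smul, smul_smul, Complex.I_mul_I,
    neg_smul, one_smul, map_neg]
  module

theorem complexLinearPart_id (x : V) : complexLinearPart LinearMap.id x = x := by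
  simp only [complexLinearPart, LinearMap.id_apply, smul_smul, Complex.I_mul_I]
  module

theorem antilinearPart_id (x : V) : antilinearPart LinearMap.id x = 0 := by
  simp only [antilinearPart, LinearMap.id_apply, smul_smul, Complex.I_mul_I]
  module

theorem complexLinearPart_add (x y : V) :
    complexLinearPart T (x + y) = complexLinearPart T x + complexLinearPart T y := by
  simp only [complexLinearPart, smul_add, map_add]
  module

theorem complexLinearPart_neg (x : V) : complexLinearPart T (-x) = -complexLinearPart T x := by
  simp only [complexLinearPart, smul_neg, map_neg]
  module

variable {T T'}

theorem complexLinearPart_comp_of_leftInverse (h : Function.LeftInverse T T') (x : V) :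
    complexLinearPart T (complexLinearPart T' x) + antilinearPart T (antilinearPart T' x) = x := by
  rw [← complexLinearPart_comp, (LinearMap.ext h : T ∘ₗ T' = LinearMap.id), complexLinearPart_id]

theorem antilinearPart_comp_of_leftInverse (h : Function.LeftInverse T T') (x : V) :
    antilinearPart T (complexLinearPart T' x) + complexLinearPart T (antilinearPart T' x) = 0 := by
  rw [← antilinearPart_comp, (LinearMap.ext h : T ∘ₗ T' = LinearMap.id), antilinearPart_id]

theorem eq_complexLinearPart_add_of_leftInverse (h : Function.LeftInverse T' T) {Z' : V → V}
    (hZ' : ∀ x, complexLinearPart T' (Z' x) = antilinearPart T' x)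
    (hinj : Function.Injective (complexLinearPart T')) {v w : V} (hw : complexLinearPart T' w = v) :
    w = complexLinearPart T v + Z' (antilinearPart T v) :=
  hinj (by rw [hw, complexLinearPart_add, hZ', complexLinearPart_comp_of_leftInverse h])

theorem apply_complexLinearPart_of_leftInverse (h : Function.LeftInverse T' T) {Z' : V → V}
    (hZ' : ∀ x, complexLinearPart T' (Z' x) = antilinearPart T' x)
    (hinj : Function.Injective (complexLinearPart T')) (v : V) :
    Z' (complexLinearPart T v) = -antilinearPart T v :=
  hinj (by rw [hZ', complexLinearPart_neg, eq_neg_iff_add_eq_zero,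
    antilinearPart_comp_of_leftInverse h])

end ComplexParts

section Symplectic

variable {V : Type} [NormedAddCommGroup V] [InnerProductSpace ℂ V] {T T' : V →ₗ[ℝ] V}

theorem inner_parts_of_symplectic (hT : ∀ x y : V, (⟪T x, T y⟫_ℂ).im = (⟪x, y⟫_ℂ).im)
    (x y : V) :
    ⟪complexLinearPart T x, complexLinearPart T y⟫_ℂ -
        conj ⟪antilinearPart T x, antilinearPart T y⟫_ℂ = ⟪x, y⟫_ℂ ∧
      ⟪complexLinearPart T x, antilinearPart T y⟫_ℂ =
        conj ⟪antilinearPart T x, complexLinearPart T y⟫_ℂ := by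
  have f1 := hT x y
  have f2 := hT (Complex.I • x) y
  have f3 := hT x (Complex.I • y)
  have f4 := hT (Complex.I • x) (Complex.I • y)
  rw [← complexLinearPart_add_antilinearPart T x, ← complexLinearPart_add_antilinearPart T y] at f1
  rw [apply_I_smul T x, ← complexLinearPart_add_antilinearPart T y] at f2
  rw [← complexLinearPart_add_antilinearPart T x, apply_I_smul T y] at f3
  rw [apply_I_smul T x, apply_I_smul T y] at f4
  simp only [inner_add_left, inner_add_right, inner_sub_left, inner_sub_right, inner_smul_left,
    inner_smul_right, Complex.conj_I, Complex.ext_iff, Complex.add_re, Complex.add_im,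
    Complex.sub_re, Complex.sub_im, Complex.mul_re, Complex.mul_im, Complex.neg_re,
    Complex.neg_im, Complex.I_re, Complex.I_im, Complex.conj_re, Complex.conj_im] at f1 f2 f3 f4 ⊢
  refine ⟨⟨?_, ?_⟩, ?_, ?_⟩ <;> linarith

theorem inner_complexLinearPart_of_leftInverse
    (hT : ∀ x y : V, (⟪T x, T y⟫_ℂ).im = (⟪x, y⟫_ℂ).im) (h : Function.LeftInverse T T') (u w : V) :
    ⟪u, complexLinearPart T' w⟫_ℂ = ⟪complexLinearPart T u, w⟫_ℂ := by
  have h1 := (inner_parts_of_symplectic hT u (complexLinearPart T' w)).1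
  have h2 := (inner_parts_of_symplectic hT u (antilinearPart T' w)).2
  have h0 : conj ⟪antilinearPart T u, antilinearPart T (complexLinearPart T' w)⟫_ℂ +
      conj ⟪antilinearPart T u, complexLinearPart T (antilinearPart T' w)⟫_ℂ = 0 := by
    rw [← map_add, ← inner_add_right, antilinearPart_comp_of_leftInverse h, inner_zero_right,
      map_zero]
  conv_rhs => rw [← complexLinearPart_comp_of_leftInverse h w, inner_add_right, h2]
  linear_combination -h1 - h0

end Symplectic

section Kernel

variable {V A AC : Type} [NormedAddCommGroup V] [InnerProductSpace ℂ V]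
  [CommRing A] [Algebra ℂ A] [CommRing AC] [Algebra ℂ AC] {κ κ' : Type}

theorem Finset.disjSum_erase_inl [DecidableEq κ] [DecidableEq κ'] (s : Finset κ) (t : Finset κ')
    (i : κ) : (s.disjSum t).erase (.inl i) = (s.erase i).disjSum t := by
  ext (k | k) <;> simp

theorem Finset.disjSum_erase_inr [DecidableEq κ] [DecidableEq κ'] (s : Finset κ) (t : Finset κ')
    (j : κ') : (s.disjSum t).erase (.inr j) = s.disjSum (t.erase j) := by
  ext (k | k) <;> simp

theorem IsAntiAlgHom.map_prod {m : A → AC} (hm : IsAntiAlgHom m) (s : Finset κ) (f : κ → A) :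
    m (∏ i ∈ s, f i) = ∏ i ∈ s, m (f i) :=
  _root_.map_prod ({ toFun := m, map_one' := hm.2.2.2, map_mul' := hm.2.2.1 } : A →* AC) f s

theorem IsAnn.apply_prod [DecidableEq κ] {ι : V →ₗ[ℂ] A} {a : V → A →ₗ[ℂ] A} (ha : IsAnn ι a)
    (u : V) (x : κ → V) (s : Finset κ) :
    a u (∏ i ∈ s, ι (x i)) = ∑ j ∈ s, ⟪u, x j⟫_ℂ • ∏ i ∈ s.erase j, ι (x i) := by
  obtain ⟨hleibniz, hone, hgen⟩ := ha u
  induction s using Finset.induction_on with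
  | empty => simpa using hone
  | insert b s hb ih =>
    rw [prod_insert hb, hleibniz, hgen, ih, sum_insert hb, erase_insert hb, smul_mul_assoc,
      one_mul, mul_sum]
    congr 1
    refine sum_congr rfl fun j hj => ?_
    rw [erase_insert_of_ne (ne_of_mem_of_not_mem hj hb).symm,
      prod_insert fun h => hb (mem_of_mem_erase h), mul_smul_comm]

theorem ext_of_spanProdsOf {W : Type} {gen : W → A} (hspan : SpanProdsOf gen)
    {B B' : A →ₗ[ℂ] A →ₗ⋆[ℂ] ℂ}
    (h : ∀ (q r : ℕ) (y : Fin q → W) (x : Fin r → W),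
      B (∏ i, gen (y i)) (∏ i, gen (x i)) = B' (∏ i, gen (y i)) (∏ i, gen (x i))) :
    B = B' := by
  have htop : Submodule.span ℂ {a | ∃ (n : ℕ) (f : Fin n → W), a = ∏ i, gen (f i)} = ⊤ :=
    eq_top_iff.2 fun x _ => hspan x
  refine LinearMap.ext_on htop ?_
  rintro _ ⟨q, y, rfl⟩
  refine LinearMap.ext_on htop ?_
  rintro _ ⟨r, x, rfl⟩
  exact h q r y x

/-- The generators `v₊ = p (ι v)` and `v₋ = m (ι v)` of `SV_ℂ`, indexed by `V ⊕ V`. -/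
def complexifiedGen (ι : V →ₗ[ℂ] A) (p : A →ₐ[ℂ] AC) (m : A → AC) : V ⊕ V → AC :=
  Sum.elim (fun v => p (ι v)) (fun v => m (ι v))

def kernelOperator (E : AC →ₗ⋆[ℂ] ℂ) (p : A →ₐ[ℂ] AC) {m : A → AC} (hm : IsAntiAlgHom m) :
    A →ₗ[ℂ] A →ₗ⋆[ℂ] ℂ :=
  LinearMap.mk₂'ₛₗ (RingHom.id ℂ) (starRingEnd ℂ) (fun φ ψ => E (p ψ * m φ))
    (fun φ₁ φ₂ ψ => by rw [hm.1, mul_add, map_add])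
    (fun c φ ψ => by rw [hm.2.1, mul_smul_comm, map_smulₛₗ, starRingEnd_self_apply]; rfl)
    (fun φ ψ₁ ψ₂ => by rw [map_add, add_mul, map_add])
    (fun c φ ψ => by rw [map_smul, smul_mul_assoc, map_smulₛₗ])

variable {ι : V →ₗ[ℂ] A} {p : A →ₐ[ℂ] AC} {m : A → AC} (hm : IsAntiAlgHom m)
  {ζ E : AC →ₗ⋆[ℂ] ℂ}

theorem kernelOperator_apply (φ ψ : A) : kernelOperator E p hm φ ψ = E (p ψ * m φ) := rfl

theorem kernelOperator_ne_zero (hE : E 1 = 1) : kernelOperator E p hm ≠ 0 := fun h => by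
  simpa [kernelOperator_apply, hm.2.2.2, hE] using LinearMap.congr_fun₂ h 1 1

theorem map_prod_mul_map_prod (hm : IsAntiAlgHom m) (x : κ → V) (y : κ' → V) (s : Finset κ)
    (t : Finset κ') :
    p (∏ i ∈ s, ι (x i)) * m (∏ j ∈ t, ι (y j)) =
      ∏ k ∈ s.disjSum t, complexifiedGen ι p m (Sum.map x y k) := by
  rw [map_prod, hm.map_prod, prod_disjSum]
  rfl

theorem kernelOperator_wick [DecidableEq κ] [DecidableEq κ']
    (hwick : SatisfiesWick (complexifiedGen ι p m) ζ E) (w₀ : V ⊕ V) (x : κ → V) (y : κ' → V)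
    (s : Finset κ) (t : Finset κ') :
    E (complexifiedGen ι p m w₀ * (p (∏ i ∈ s, ι (x i)) * m (∏ j ∈ t, ι (y j)))) =
      ∑ i ∈ s, ζ (complexifiedGen ι p m w₀ * p (ι (x i))) *
          kernelOperator E p hm (∏ j ∈ t, ι (y j)) (∏ k ∈ s.erase i, ι (x k)) +
        ∑ j ∈ t, ζ (complexifiedGen ι p m w₀ * m (ι (y j))) *
          kernelOperator E p hm (∏ k ∈ t.erase j, ι (y k)) (∏ i ∈ s, ι (x i)) := by
  rw [map_prod_mul_map_prod hm, hwick, sum_disjSum]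
  congr 1 <;> refine sum_congr rfl fun i _ => ?_
  · rw [disjSum_erase_inl, kernelOperator_apply, map_prod_mul_map_prod hm]
    rfl
  · rw [disjSum_erase_inr, kernelOperator_apply, map_prod_mul_map_prod hm]
    rfl

theorem kernelOperator_mul_apply (v : V) (φ ψ : A) :
    kernelOperator E p hm (ι v * φ) ψ = E (complexifiedGen ι p m (.inr v) * (p ψ * m φ)) := by
  rw [kernelOperator_apply, hm.2.2.1, mul_left_comm]
  rfl

theorem kernelOperator_apply_mul (v : V) (φ ψ : A) :
    kernelOperator E p hm φ (ι v * ψ) = E (complexifiedGen ι p m (.inl v) * (p ψ * m φ)) := by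
  rw [kernelOperator_apply, map_mul p, mul_assoc]
  rfl

theorem kernelOperator_apply_ann_prod [DecidableEq κ] {a : V → A →ₗ[ℂ] A} (ha : IsAnn ι a)
    (u : V) (φ : A) (x : κ → V) (s : Finset κ) :
    kernelOperator E p hm φ (a u (∏ i ∈ s, ι (x i))) =
      ∑ i ∈ s, ⟪x i, u⟫_ℂ * kernelOperator E p hm φ (∏ k ∈ s.erase i, ι (x k)) := by
  rw [ha.apply_prod, map_sum]
  refine sum_congr rfl fun i _ => ?_
  rw [map_smulₛₗ, smul_eq_mul, inner_conj_symm]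

theorem kernelOperator_ann_prod_apply [DecidableEq κ'] {a : V → A →ₗ[ℂ] A} (ha : IsAnn ι a)
    (u : V) (y : κ' → V) (t : Finset κ') (ψ : A) :
    kernelOperator E p hm (a u (∏ j ∈ t, ι (y j))) ψ =
      ∑ j ∈ t, ⟪u, y j⟫_ℂ * kernelOperator E p hm (∏ k ∈ t.erase j, ι (y k)) ψ := by
  rw [ha.apply_prod, map_sum, LinearMap.sum_apply]
  refine sum_congr rfl fun j _ => ?_
  rw [map_smul, LinearMap.smul_apply, smul_eq_mul]

theorem kernelOperator_intertwines_mul (hspan : SpanProdsOf fun w => ι w) {a : V → A →ₗ[ℂ] A}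
    (ha : IsAnn ι a) (hwick : SatisfiesWick (complexifiedGen ι p m) ζ E) (v c d : V)
    (hplus : ∀ x, ζ (m (ι v) * p (ι x)) = ⟪x, c⟫_ℂ + ζ (p (ι d) * p (ι x)))
    (hminus : ∀ y, ζ (m (ι v) * m (ι y)) = ζ (p (ι d) * m (ι y))) (φ ψ : A) :
    kernelOperator E p hm (ι v * φ) ψ =
      kernelOperator E p hm φ (a c ψ) + kernelOperator E p hm φ (ι d * ψ) := by
  have key : (kernelOperator E p hm).comp (LinearMap.mulLeft ℂ (ι v)) =
      (kernelOperator E p hm).compl₂ (a c) +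
        (kernelOperator E p hm).compl₂ (LinearMap.mulLeft ℂ (ι d)) := by
    refine ext_of_spanProdsOf hspan fun q r y x => ?_
    simp only [LinearMap.comp_apply, LinearMap.add_apply, LinearMap.compl₂_apply,
      LinearMap.mulLeft_apply]
    rw [kernelOperator_mul_apply, kernelOperator_apply_mul, kernelOperator_apply_ann_prod hm ha,
      kernelOperator_wick hm hwick, kernelOperator_wick hm hwick]
    simp only [complexifiedGen, Sum.elim_inl, Sum.elim_inr, hplus, hminus, add_mul, sum_add_distrib]
    ring
  simpa using LinearMap.congr_fun₂ key φ ψ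

theorem kernelOperator_intertwines_ann (hspan : SpanProdsOf fun w => ι w) {a : V → A →ₗ[ℂ] A}
    (ha : IsAnn ι a) (hwick : SatisfiesWick (complexifiedGen ι p m) ζ E) (v c d : V)
    (hplus : ∀ x, ⟪x, c⟫_ℂ + ζ (p (ι d) * p (ι x)) = 0)
    (hminus : ∀ y, ⟪v, y⟫_ℂ = ζ (p (ι d) * m (ι y))) (φ ψ : A) :
    kernelOperator E p hm (a v φ) ψ =
      kernelOperator E p hm φ (a c ψ) + kernelOperator E p hm φ (ι d * ψ) := by
  have key : (kernelOperator E p hm).comp (a v) =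
      (kernelOperator E p hm).compl₂ (a c) +
        (kernelOperator E p hm).compl₂ (LinearMap.mulLeft ℂ (ι d)) := by
    refine ext_of_spanProdsOf hspan fun q r y x => ?_
    simp only [LinearMap.comp_apply, LinearMap.add_apply, LinearMap.compl₂_apply,
      LinearMap.mulLeft_apply]
    rw [kernelOperator_ann_prod_apply hm ha, kernelOperator_apply_ann_prod hm ha,
      kernelOperator_apply_mul, kernelOperator_wick hm hwick]
    simp only [complexifiedGen, Sum.elim_inl, ← hminus]
    rw [← add_assoc, ← sum_add_distrib, right_eq_add]
    exact sum_eq_zero fun i _ => by rw [← add_mul, hplus, zero_mul]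
  simpa using LinearMap.congr_fun₂ key φ ψ

end Kernel

theorem weak_metaplectic_exists_general {V A AC : Type}
    [NormedAddCommGroup V] [InnerProductSpace ℂ V]
    [CommRing A] [Algebra ℂ A] [CommRing AC] [Algebra ℂ AC]
    (ι : V →ₗ[ℂ] A) (hspan : SpanProdsOf fun w => ι w)
    (aA : V → A →ₗ[ℂ] A) (haA : IsAnn ι aA)
    (p : A →ₐ[ℂ] AC) (m : A → AC) (hm : IsAntiAlgHom m)
    (gen : V ⊕ V → AC)
    (hgen : ∀ w : V ⊕ V, gen w = Sum.elim (fun v => p (ι v)) (fun v => m (ι v)) w)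
    (mulC : (AC →ₗ⋆[ℂ] ℂ) → (AC →ₗ⋆[ℂ] ℂ) → (AC →ₗ⋆[ℂ] ℂ))
    (hmulC : IsConvProdOf gen mulC)
    (εC : AC →ₗ⋆[ℂ] ℂ) (hεC : IsCounitOf gen εC)
    -- the symplectic automorphism and its parts
    (g : V ≃L[ℝ] V)
    (hg : ∀ x y : V, (inner ℂ (g x) (g y) : ℂ).im = (inner ℂ x y : ℂ).im)
    (Cg Ag Cg' Ag' Zg Zg' Cg'inv : V → V)
    (hCg : ∀ x : V, Cg x = (2 : ℝ)⁻¹ • (g x - Complex.I • g (Complex.I • x)))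
    (hAg : ∀ x : V, Ag x = (2 : ℝ)⁻¹ • (g x + Complex.I • g (Complex.I • x)))
    (hCg' : ∀ x : V, Cg' x = (2 : ℝ)⁻¹ • (g.symm x - Complex.I • g.symm (Complex.I • x)))
    (hAg' : ∀ x : V, Ag' x = (2 : ℝ)⁻¹ • (g.symm x + Complex.I • g.symm (Complex.I • x)))
    (hZg : ∀ x : V, Cg (Zg x) = Ag x)
    (hZg' : ∀ x : V, Cg' (Zg' x) = Ag' x)
    (hCg'inv : ∀ x : V, Cg' (Cg'inv x) = x ∧ Cg'inv (Cg' x) = x)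
    -- the quadratic corresponding to Z
    (ζZ : AC →ₗ⋆[ℂ] ℂ) (hζq : IsQuadOf gen ζZ)
    (hζpp : ∀ x y : V, ζZ (p (ι x) * p (ι y)) = (inner ℂ x (Zg' y) : ℂ))
    (hζpm : ∀ x y : V, ζZ (p (ι x) * m (ι y)) = (inner ℂ x (Cg'inv y) : ℂ))
    (hζmm : ∀ x y : V, ζZ (m (ι x) * m (ι y)) = (inner ℂ (Zg y) x : ℂ))
    -- the Gaussian u_g = e^Z
    (E : AC →ₗ⋆[ℂ] ℂ) (hE : IsGaussianOf gen mulC εC ζZ E) :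
    ∃ Ug : A →ₗ[ℂ] (A →ₗ⋆[ℂ] ℂ),
      Ug ≠ 0 ∧
      -- U_g has kernel u_g = e^Z
      (∀ φ ψ : A, Ug φ ψ = E (p ψ * m φ)) ∧
      -- U_g c(v) = (c(C_g v) + a(A_g v)) U_g
      (∀ (v : V) (φ ψ : A),
        Ug (ι v * φ) ψ = Ug φ (aA (Cg v) ψ) + Ug φ (ι (Ag v) * ψ)) ∧
      -- U_g a(v) = (c(A_g v) + a(C_g v)) U_g
      (∀ (v : V) (φ ψ : A),
        Ug (aA v φ) ψ = Ug φ (aA (Ag v) ψ) + Ug φ (ι (Cg v) * ψ)) := by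
  obtain rfl : gen = complexifiedGen ι p m := funext hgen
  obtain rfl : Cg = complexLinearPart (g : V →ₗ[ℝ] V) := funext hCg
  obtain rfl : Ag = antilinearPart (g : V →ₗ[ℝ] V) := funext hAg
  obtain rfl : Cg' = complexLinearPart (g.symm : V →ₗ[ℝ] V) := funext hCg'
  obtain rfl : Ag' = antilinearPart (g.symm : V →ₗ[ℝ] V) := funext hAg'
  have hwick : SatisfiesWick _ _ _ := hE.satisfiesWick hmulC hζq hεC
  have hadj := inner_complexLinearPart_of_leftInverse (T := (g : V →ₗ[ℝ] V))
    (T' := (g.symm : V →ₗ[ℝ] V)) hg fun x => g.apply_symm_apply x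
  have hinj : Function.Injective (complexLinearPart (g.symm : V →ₗ[ℝ] V)) :=
    Function.LeftInverse.injective fun x => (hCg'inv x).2
  have hZsymm : ∀ x y, ⟪Zg x, y⟫_ℂ = ⟪Zg y, x⟫_ℂ := fun x y => by rw [← hζmm, ← hζmm, mul_comm]
  have hZ'symm : ∀ x y, ⟪x, Zg' y⟫_ℂ = ⟪y, Zg' x⟫_ℂ := fun x y => by rw [← hζpp, ← hζpp, mul_comm]
  refine ⟨kernelOperator E p hm, kernelOperator_ne_zero hm (hE.apply_one hεC), fun _ _ => rfl,
    fun v => kernelOperator_intertwines_mul hm hspan haA hwick v _ _ (fun x => ?_) (fun y => ?_),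
    fun v => kernelOperator_intertwines_ann hm hspan haA hwick v _ _ (fun x => ?_) (fun y => ?_)⟩
  · rw [mul_comm, hζpm, hζpp,
      eq_complexLinearPart_add_of_leftInverse g.symm_apply_apply hZg' hinj (hCg'inv v).1,
      inner_add_right, hZ'symm]
  · rw [hζmm, hζpm, hZsymm, ← hZg, ← hadj, (hCg'inv y).1]
  · rw [hζpp, ← hZ'symm, apply_complexLinearPart_of_leftInverse g.symm_apply_apply hZg' hinj,
      inner_neg_right, add_neg_cancel]
  · rw [hζpm, ← hadj, (hCg'inv y).1]

/-- Existence of weak metaplectic operators.  For `g ∈ Sp(V)`, the Gaussian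
`u_g = e^Z ∈ SV_ℂ'` — where `Z` acts by `Z(v₊) = (C_g⁻¹v)₋ + (Z_{g⁻¹}v)₊` and
`Z(v₋) = (C_{g⁻¹}⁻¹v)₊ + (Z_g v)₋`, so that the corresponding quadratic `ζ_Z`
(with `ζ_Z(ab) = ⟨a|Zb⟩`) has `ζ_Z(x₊y₊) = ⟨x|Z_{g⁻¹}y⟩`,
`ζ_Z(x₊y₋) = ⟨x|C_{g⁻¹}⁻¹y⟩`, `ζ_Z(x₋y₋) = ⟨Z_g y|x⟩` — is the kernel of a
nonzero linear map `U_g : SV → SV'` satisfying the intertwining relations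
`U_g c(v) = (c(C_g v) + a(A_g v)) U_g` and `U_g a(v) = (c(A_g v) + a(C_g v)) U_g`. -/
theorem weak_metaplectic_exists {V A AC : Type}
    [NormedAddCommGroup V] [InnerProductSpace ℂ V] [CompleteSpace V]
    [CommRing A] [Algebra ℂ A] [CommRing AC] [Algebra ℂ AC]
    (ι : V →ₗ[ℂ] A) (hA : IsSymmAlg ι) (hspan : SpanProdsOf fun w => ι w)
    (aA : V → A →ₗ[ℂ] A) (haA : IsAnn ι aA)
    (p : A →ₐ[ℂ] AC) (m : A → AC) (hm : IsAntiAlgHom m)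
    (gen : V ⊕ V → AC)
    (hgen : ∀ w : V ⊕ V, gen w = Sum.elim (fun v => p (ι v)) (fun v => m (ι v)) w)
    (hspanC : SpanProdsOf gen)
    (mulC : (AC →ₗ⋆[ℂ] ℂ) → (AC →ₗ⋆[ℂ] ℂ) → (AC →ₗ⋆[ℂ] ℂ))
    (hmulC : IsConvProdOf gen mulC)
    (εC : AC →ₗ⋆[ℂ] ℂ) (hεC : IsCounitOf gen εC)
    -- the symplectic automorphism and its parts
    (g : V ≃L[ℝ] V)
    (hg : ∀ x y : V, (inner ℂ (g x) (g y) : ℂ).im = (inner ℂ x y : ℂ).im)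
    (Cg Ag Cg' Ag' Zg Zg' Cg'inv : V → V)
    (hCg : ∀ x : V, Cg x = (2 : ℝ)⁻¹ • (g x - Complex.I • g (Complex.I • x)))
    (hAg : ∀ x : V, Ag x = (2 : ℝ)⁻¹ • (g x + Complex.I • g (Complex.I • x)))
    (hCg' : ∀ x : V, Cg' x = (2 : ℝ)⁻¹ • (g.symm x - Complex.I • g.symm (Complex.I • x)))
    (hAg' : ∀ x : V, Ag' x = (2 : ℝ)⁻¹ • (g.symm x + Complex.I • g.symm (Complex.I • x)))
    (hZg : ∀ x : V, Cg (Zg x) = Ag x)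
    (hZg' : ∀ x : V, Cg' (Zg' x) = Ag' x)
    (hCg'inv : ∀ x : V, Cg' (Cg'inv x) = x ∧ Cg'inv (Cg' x) = x)
    -- the quadratic corresponding to Z
    (ζZ : AC →ₗ⋆[ℂ] ℂ) (hζq : IsQuadOf gen ζZ)
    (hζpp : ∀ x y : V, ζZ (p (ι x) * p (ι y)) = (inner ℂ x (Zg' y) : ℂ))
    (hζpm : ∀ x y : V, ζZ (p (ι x) * m (ι y)) = (inner ℂ x (Cg'inv y) : ℂ))
    (hζmm : ∀ x y : V, ζZ (m (ι x) * m (ι y)) = (inner ℂ (Zg y) x : ℂ))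
    -- the Gaussian u_g = e^Z
    (E : AC →ₗ⋆[ℂ] ℂ) (hE : IsGaussianOf gen mulC εC ζZ E) :
    ∃ Ug : A →ₗ[ℂ] (A →ₗ⋆[ℂ] ℂ),
      Ug ≠ 0 ∧
      -- U_g has kernel u_g = e^Z
      (∀ φ ψ : A, Ug φ ψ = E (p ψ * m φ)) ∧
      -- U_g c(v) = (c(C_g v) + a(A_g v)) U_g
      (∀ (v : V) (φ ψ : A),
        Ug (ι v * φ) ψ = Ug φ (aA (Cg v) ψ) + Ug φ (ι (Ag v) * ψ)) ∧
      -- U_g a(v) = (c(A_g v) + a(C_g v)) U_g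
      (∀ (v : V) (φ ψ : A),
        Ug (aA v φ) ψ = Ug φ (aA (Ag v) ψ) + Ug φ (ι (Cg v) * ψ)) :=
  weak_metaplectic_exists_general ι hspan aA haA p m hm gen hgen mulC hmulC εC hεC g hg Cg Ag Cg'
    Ag' Zg Zg' Cg'inv hCg hAg hCg' hAg' hZg hZg' hCg'inv ζZ hζq hζpp hζpm hζmm E hE
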